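/- arXiv:2409.03368 — 4 statements merged into one kernel-verified Lean document; each statement's English description precedes it below -/
import Mathlib

section
/- Let L ≥ 1, let n₀, n₁, …, n_L be positive integers, and for each l = 1, …, L let w^l be a real n_l × n_{l−1} matrix. Let a⁰ = r⁰ ∈ ℝ^{n₀}, define ANN activations inductively by a^l = R(w^l · a^{l−1}) for l = 1, …, L, and let r^1, …, r^L be arbitrary vectors with r^l ∈ ℝ^{n_l}. Then ‖r^L − a^L‖₂ ≤ Σ_{l=1}^{L} (Π_{k=l+1}^{L} ‖w^k‖₂) · ‖r^l − R(w^l · r^{l−1})‖₂, where the empty product (for l = L) equals 1. -/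
/-
Each layer `x ↦ R(w x)` is `‖w‖₂`-Lipschitz, because ReLU is 1-Lipschitz in every coordinate.
Hence an error `δ` introduced at layer `l` is amplified by at most `∏_{k > l} ‖w^k‖₂` on its way
to the output, and the triangle inequality adds up the contributions of all layers.
-/

open scoped Matrix.Norms.L2Operator

/-- Componentwise ReLU on `ℝⁿ` with the Euclidean norm. -/
noncomputable def reluV (n : ℕ) (x : EuclideanSpace ℝ (Fin n)) : EuclideanSpace ℝ (Fin n) :=
  WithLp.toLp 2 (fun i => max (x i) 0)

open Finset NNReal

theorem dist_le_sum_prod_lipschitz_mul_dist {E : ℕ → Type*} [∀ l, PseudoMetricSpace (E l)]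
    (f : ∀ l, E l → E (l + 1)) (K : ℕ → ℝ≥0) (hf : ∀ l, LipschitzWith (K l) (f l))
    (a r : ∀ l, E l) (h0 : r 0 = a 0) (ha : ∀ l, a (l + 1) = f l (a l)) (L : ℕ) :
    dist (r L) (a L) ≤
      ∑ l ∈ range L, (∏ k ∈ Ico (l + 1) L, (K k : ℝ)) * dist (r (l + 1)) (f l (r l)) := by
  induction L with
  | zero => simp [h0]
  | succ L ih =>
    have hstep : dist (r (L + 1)) (a (L + 1)) ≤
        dist (r (L + 1)) (f L (r L)) + K L * dist (r L) (a L) := by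
      rw [ha L]
      exact (dist_triangle _ _ _).trans (add_le_add le_rfl ((hf L).dist_le_mul _ _))
    have hsum :
        ∑ l ∈ range L, (∏ k ∈ Ico (l + 1) (L + 1), (K k : ℝ)) * dist (r (l + 1)) (f l (r l)) =
          K L * ∑ l ∈ range L, (∏ k ∈ Ico (l + 1) L, (K k : ℝ)) * dist (r (l + 1)) (f l (r l)) := by
      rw [mul_sum]
      refine sum_congr rfl fun l hl => ?_
      rw [prod_Ico_succ_top (by simpa using hl)]
      ring
    rw [sum_range_succ, hsum]
    simp only [Ico_self, prod_empty, one_mul]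
    have := mul_le_mul_of_nonneg_left ih (K L).coe_nonneg
    linarith

theorem lipschitzWith_one_reluV (n : ℕ) : LipschitzWith 1 (reluV n) := by
  refine LipschitzWith.of_dist_le_mul fun x y => ?_
  rw [NNReal.coe_one, one_mul, EuclideanSpace.dist_eq, EuclideanSpace.dist_eq]
  refine Real.sqrt_le_sqrt (sum_le_sum fun i _ => ?_)
  simp only [reluV, PiLp.toLp_apply, Real.dist_eq]
  exact pow_le_pow_left₀ (abs_nonneg _) (abs_max_sub_max_le_abs _ _ _) 2

theorem Matrix.lipschitzWith_l2_opNNNorm_mulVec {𝕜 m n : Type*} [RCLike 𝕜] [Fintype m]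
    [Fintype n] [DecidableEq n] (A : Matrix m n 𝕜) :
    LipschitzWith ‖A‖₊ fun x : EuclideanSpace 𝕜 n => (EuclideanSpace.equiv m 𝕜).symm (A.mulVec x) :=
  (Matrix.toEuclideanLin.trans LinearMap.toContinuousLinearMap A).lipschitz

theorem lipschitzWith_reluV_mulVec {m n : ℕ} (A : Matrix (Fin m) (Fin n) ℝ) :
    LipschitzWith ‖A‖₊ fun x : EuclideanSpace ℝ (Fin n) =>
      reluV m ((EuclideanSpace.equiv (Fin m) ℝ).symm (A.mulVec x)) := by
  simpa only [one_mul, Function.comp_def] using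
    (lipschitzWith_one_reluV m).comp A.lipschitzWith_l2_opNNNorm_mulVec

theorem model_error_bound_general (L : ℕ) (n : ℕ → ℕ)
    (w : (l : ℕ) → Matrix (Fin (n (l + 1))) (Fin (n l)) ℝ)
    (a r : (l : ℕ) → EuclideanSpace ℝ (Fin (n l)))
    (h0 : r 0 = a 0)
    (ha : ∀ l, a (l + 1) =
      reluV (n (l + 1)) ((EuclideanSpace.equiv (Fin (n (l + 1))) ℝ).symm ((w l).mulVec (a l)))) :
    ‖r L - a L‖ ≤ ∑ l ∈ Finset.range L, (∏ k ∈ Finset.Ico (l + 1) L, ‖w k‖) *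
      ‖r (l + 1) -
        reluV (n (l + 1)) ((EuclideanSpace.equiv (Fin (n (l + 1))) ℝ).symm ((w l).mulVec (r l)))‖ := by
  simpa only [dist_eq_norm, coe_nnnorm] using
    dist_le_sum_prod_lipschitz_mul_dist _ (fun l => ‖w l‖₊)
      (fun l => lipschitzWith_reluV_mulVec (w l)) a r h0 ha L

/-- Full model conversion-error bound (Theorem 1): with layer widths `n 0, …, n L` positive,
weights `w l : ℝ^{n (l+1) × n l}` (so `w (l-1)` is the paper's `w^l`), ANN activations
`a (l+1) = R(w l · a l)` with `a 0 = r 0`, and arbitrary `r l ∈ ℝ^{n l}`,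
`‖r L − a L‖₂ ≤ Σ_{l=1}^{L} (Π_{k=l+1}^{L} ‖w^k‖₂) ‖r^l − R(w^l r^{l−1})‖₂`. -/
theorem model_error_bound (L : ℕ) (hL : 1 ≤ L) (n : ℕ → ℕ) (hn : ∀ l, 0 < n l)
    (w : (l : ℕ) → Matrix (Fin (n (l + 1))) (Fin (n l)) ℝ)
    (a r : (l : ℕ) → EuclideanSpace ℝ (Fin (n l)))
    (h0 : r 0 = a 0)
    (ha : ∀ l, a (l + 1) =
      reluV (n (l + 1)) ((EuclideanSpace.equiv (Fin (n (l + 1))) ℝ).symm ((w l).mulVec (a l)))) :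
    ‖r L - a L‖ ≤ ∑ l ∈ Finset.range L, (∏ k ∈ Finset.Ico (l + 1) L, ‖w k‖) *
      ‖r (l + 1) -
        reluV (n (l + 1)) ((EuclideanSpace.equiv (Fin (n (l + 1))) ℝ).symm ((w l).mulVec (r l)))‖ :=
  model_error_bound_general L n w a r h0 ha
end

section
/- Fix N ≥ 1 and z ∈ ℝᴺ, and let g : (0, ∞) → ℝ be given by g(θ) = Σ_{i=1}^{N} (C(z_i; θ) − R(z_i))², where C(x; θ) = min(max(0, x), θ) and R(x) = max(x, 0). Then for every θ > 0, g is differentiable at θ with derivative g′(θ) = −Σ_{i=1}^{N} 2·max(z_i − θ, 0); equivalently g′(θ) = −Σ_{i=1}^{N} 2(z_i − θ)·H(z_i − θ) where H is the Heaviside step function. -/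
/-- Heaviside step function: `H x = 1` if `x ≥ 0`, else `0`. -/
noncomputable def heaviside (x : ℝ) : ℝ := if 0 ≤ x then 1 else 0

/-- `x ↦ (max x 0)^2` is differentiable with derivative `2 * max c 0`. -/
lemma hasDerivAt_max_sq (c : ℝ) :
    HasDerivAt (fun x : ℝ => max x 0 ^ 2) (2 * max c 0) c := by
  rcases lt_trichotomy c 0 with hc | hc | hc
  · have h : (fun x : ℝ => max x 0 ^ 2) =ᶠ[nhds c] fun _ => (0 : ℝ) := by
      filter_upwards [eventually_lt_nhds hc] with x hx
      simp [max_eq_right hx.le]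
    have : HasDerivAt (fun _ : ℝ => (0 : ℝ)) 0 c := hasDerivAt_const _ _
    simpa [max_eq_right hc.le] using this.congr_of_eventuallyEq h
  · subst hc
    rw [hasDerivAt_iff_isLittleO]
    simp only [max_self, ne_eq, OfNat.ofNat_ne_zero, not_false_eq_true, zero_pow, sub_zero,
      smul_eq_mul, mul_zero, zero_mul]
    have h1 : (fun x : ℝ => max x 0 ^ 2) =O[nhds 0] fun x => x ^ 2 := by
      apply Asymptotics.IsBigO.of_bound 1
      filter_upwards with x
      have : |max x 0| ≤ |x| := by
        rcases le_or_gt x 0 with h | h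
        · simp [max_eq_right h]
        · simp [max_eq_left h.le]
      calc ‖max x 0 ^ 2‖ = |max x 0| ^ 2 := by rw [sq_abs]; simp [abs_pow]
        _ ≤ |x| ^ 2 := by gcongr
        _ = 1 * ‖x ^ 2‖ := by rw [one_mul]; rw [sq_abs]; simp [abs_pow]
    have h2 : (fun x : ℝ => x ^ 2) =o[nhds 0] fun x => x := by
      have := (hasDerivAt_pow 2 (0:ℝ)).isLittleO
      simpa using this
    simpa using h1.trans_isLittleO h2
  · have h : (fun x : ℝ => max x 0 ^ 2) =ᶠ[nhds c] fun x => x ^ 2 := by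
      filter_upwards [eventually_gt_nhds hc] with x hx
      simp [max_eq_left hx.le]
    have : HasDerivAt (fun x : ℝ => x ^ 2) (2 * c) c := by
      simpa using hasDerivAt_pow 2 c
    simpa [max_eq_left hc.le] using this.congr_of_eventuallyEq h

/-- Local threshold balancing update rule: for `N ≥ 1`, `z ∈ ℝᴺ` and `θ > 0`, the objective
`g θ = Σ_i (C(z_i;θ) − R(z_i))²` (with `C(x;θ) = min (max 0 x) θ`, `R(x) = max x 0`) is
differentiable at `θ` with `g′(θ) = −Σ_i 2 max(z_i − θ, 0) = −Σ_i 2(z_i − θ) H(z_i − θ)`. -/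
theorem threshold_balancing_update_rule (N : ℕ) (hN : 1 ≤ N) (z : Fin N → ℝ)
    (θ : ℝ) (hθ : 0 < θ) :
    HasDerivAt (fun t : ℝ => ∑ i, (min (max 0 (z i)) t - max (z i) 0) ^ 2)
      (-(∑ i, 2 * max (z i - θ) 0)) θ ∧
    -(∑ i, 2 * max (z i - θ) 0) = -(∑ i, 2 * (z i - θ) * heaviside (z i - θ)) := by
  constructor
  · have key : ∀ i : Fin N,
        HasDerivAt (fun t : ℝ => (min (max 0 (z i)) t - max (z i) 0) ^ 2)
          (-(2 * max (z i - θ) 0)) θ := by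
      intro i
      set a := max (z i) 0 with ha
      have heq : (fun t : ℝ => (min (max 0 (z i)) t - max (z i) 0) ^ 2)
          = fun t : ℝ => max (a - t) 0 ^ 2 := by
        funext t
        rw [max_comm 0 (z i), ← ha]
        rcases le_total a t with h | h
        · rw [min_eq_left h, max_eq_right (by linarith)]; ring
        · rw [min_eq_right h, max_eq_left (by linarith)]; ring
      rw [heq]
      have h1 : HasDerivAt (fun t : ℝ => a - t) (-1) θ := by
        simpa using (hasDerivAt_id θ).const_sub a
      have h2 := (hasDerivAt_max_sq (a - θ)).comp θ h1
      have hmax : max (a - θ) 0 = max (z i - θ) 0 := by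
        rcases le_total (z i) 0 with h | h
        · rw [ha, max_eq_right h, max_eq_right (by linarith), max_eq_right (by linarith)]
        · rw [ha, max_eq_left h]
      have : 2 * max (a - θ) 0 * (-1) = -(2 * max (z i - θ) 0) := by rw [hmax]; ring
      rwa [this] at h2
    have := HasDerivAt.fun_sum (u := Finset.univ) (fun i _ => key i)
    simpa [Finset.sum_neg_distrib] using this
  · congr 1
    apply Finset.sum_congr rfl
    intro i _
    unfold heaviside
    rcases le_or_gt 0 (z i - θ) with h | h
    · rw [max_eq_left h, if_pos h]; ring
    · rw [max_eq_right h.le, if_neg (not_le.mpr h)]; ring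
end

section
/- Consider an IF neuron layer in layer l with reset-by-subtraction: threshold θˡ > 0, weight matrix w (n×m), previous-layer spikes s^{l−1}(t) ∈ ℝᵐ and previous-layer threshold θ^{l−1}, input currents I(t) = w·s^{l−1}(t)·θ^{l−1}, pre-firing potential v(t⁻) = v(t−1) + I(t), spikes s(t) with i-th component H(v_i(t⁻) − θˡ), and v(t) = v(t⁻) − θˡ·s(t). Define the average postsynaptic potentials r^l(T) = (θˡ/T)·Σ_{t=1}^{T} s(t) and r^{l−1}(T) = (θ^{l−1}/T)·Σ_{t=1}^{T} s^{l−1}(t). Then for every integer T ≥ 1, r^l(T) = w·r^{l−1}(T) − (v(T) − v(0))/T. -/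
/-- Firing-rate relation between adjacent layers (Equation 6): with threshold `θ > 0`,
input currents `I t = θp • w ·ᵥ sp t`, IF dynamics with reset-by-subtraction, and average
postsynaptic potentials `r T = (θ/T) Σ_{t=1}^{T} s t`, `rp T = (θp/T) Σ_{t=1}^{T} sp t`,
one has `r T = w ·ᵥ rp T − (v T − v 0)/T` for every `T ≥ 1`. -/
theorem if_rate_relation (n m : ℕ) (θ θp : ℝ) (hθ : 0 < θ)
    (w : Matrix (Fin n) (Fin m) ℝ)
    (sp : ℕ → Fin m → ℝ) (v s : ℕ → Fin n → ℝ)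
    (hs : ∀ t, ∀ i, s (t + 1) i = heaviside (v t i + θp * w.mulVec (sp (t + 1)) i - θ))
    (hv : ∀ t, ∀ i, v (t + 1) i = v t i + θp * w.mulVec (sp (t + 1)) i - θ * s (t + 1) i)
    (T : ℕ) (hT : 1 ≤ T) :
    (θ / T) • (∑ t ∈ Finset.range T, s (t + 1)) =
      w.mulVec ((θp / T) • ∑ t ∈ Finset.range T, sp (t + 1)) -
        ((T : ℝ))⁻¹ • (v T - v 0) := by
  have hT0 : (T : ℝ) ≠ 0 := by positivity
  funext i
  have key : ∀ t, θ * s (t + 1) i =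
      θp * w.mulVec (sp (t + 1)) i - (v (t + 1) i - v t i) := by
    intro t; have := hv t i; linarith
  have tele : ∑ t ∈ Finset.range T, (v (t + 1) i - v t i) = v T i - v 0 i :=
    Finset.sum_range_sub (fun t => v t i) T
  have hsum : θ * ∑ t ∈ Finset.range T, s (t + 1) i =
      θp * (∑ t ∈ Finset.range T, w.mulVec (sp (t + 1)) i) - (v T i - v 0 i) := by
    rw [Finset.mul_sum, Finset.mul_sum, ← tele, ← Finset.sum_sub_distrib]
    exact Finset.sum_congr rfl fun t _ => key t
  have hmv : ∑ t ∈ Finset.range T, w.mulVec (sp (t + 1)) i =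
      w.mulVec (∑ t ∈ Finset.range T, sp (t + 1)) i := by
    simp [Matrix.mulVec, dotProduct, Finset.mul_sum, Finset.sum_apply]
    rw [Finset.sum_comm]
  simp only [Pi.smul_apply, Pi.sub_apply, Finset.sum_apply, smul_eq_mul,
    Matrix.mulVec_smul]
  rw [← hmv]
  field_simp
  linarith [hsum]
end

section
/- Consider an IF neuron layer with reset-by-subtraction: threshold θ > 0, weight matrix w (n×m), previous-layer spikes s^{l−1}(t) ∈ ℝᵐ and previous-layer threshold θ^{l−1}, input currents I(t) = w·s^{l−1}(t)·θ^{l−1}, pre-firing potential v(t⁻) = v(t−1) + I(t), spikes s(t) with i-th component H(v_i(t⁻) − θ), and v(t) = v(t⁻) − θ·s(t). For integers 0 ≤ t₀ < T, define the delayed average postsynaptic potentials r(t₀, T) = θ·Σ_{t=t₀+1}^{T} s(t)/(T − t₀) and r^{l−1}(t₀, T) = θ^{l−1}·Σ_{t=t₀+1}^{T} s^{l−1}(t)/(T − t₀). Then r(t₀, T) = w·r^{l−1}(t₀, T) − (v(T) − v(t₀))/(T − t₀). -/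
/-- Delayed-evaluation rate relation (Equation 18): with IF dynamics with
reset-by-subtraction, input currents `I t = θp • w ·ᵥ sp t`, and delayed average
postsynaptic potentials `r(t₀,T) = θ Σ_{t=t₀+1}^{T} s t / (T − t₀)` (similarly for the
previous layer), for all `0 ≤ t₀ < T` one has
`r(t₀,T) = w ·ᵥ rp(t₀,T) − (v T − v t₀)/(T − t₀)`. -/
theorem if_delayed_rate_relation (n m : ℕ) (θ θp : ℝ) (hθ : 0 < θ)
    (w : Matrix (Fin n) (Fin m) ℝ)
    (sp : ℕ → Fin m → ℝ) (v s : ℕ → Fin n → ℝ)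
    (hs : ∀ t, ∀ i, s (t + 1) i = heaviside (v t i + θp * w.mulVec (sp (t + 1)) i - θ))
    (hv : ∀ t, ∀ i, v (t + 1) i = v t i + θp * w.mulVec (sp (t + 1)) i - θ * s (t + 1) i)
    (t₀ T : ℕ) (ht : t₀ < T) :
    (θ / ((T : ℝ) - (t₀ : ℝ))) • (∑ t ∈ Finset.Ico t₀ T, s (t + 1)) =
      w.mulVec ((θp / ((T : ℝ) - (t₀ : ℝ))) • ∑ t ∈ Finset.Ico t₀ T, sp (t + 1)) -
        ((T : ℝ) - (t₀ : ℝ))⁻¹ • (v T - v t₀) := by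
  have hd : (0 : ℝ) < (T : ℝ) - (t₀ : ℝ) := by
    have : (t₀:ℝ) < T := by exact_mod_cast ht
    linarith
  have htle : t₀ ≤ T := le_of_lt ht
  funext i
  have tel : ∑ t ∈ Finset.Ico t₀ T, (v (t + 1) i - v t i) = v T i - v t₀ i := by
    rw [Finset.sum_Ico_eq_sub _ htle]
    simp [Finset.sum_range_sub (fun t => v t i)]
  have key : θ * ∑ t ∈ Finset.Ico t₀ T, s (t + 1) i
      = θp * ∑ t ∈ Finset.Ico t₀ T, w.mulVec (sp (t + 1)) i - (v T i - v t₀ i) := by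
    rw [← tel, Finset.mul_sum, Finset.mul_sum, ← Finset.sum_sub_distrib]
    apply Finset.sum_congr rfl
    intro t _
    linarith [hv t i]
  have hw : w.mulVec ((θp / ((T : ℝ) - (t₀ : ℝ))) • ∑ t ∈ Finset.Ico t₀ T, sp (t + 1)) i
      = (θp / ((T : ℝ) - (t₀ : ℝ))) * ∑ t ∈ Finset.Ico t₀ T, w.mulVec (sp (t + 1)) i := by
    rw [Matrix.mulVec_smul]
    simp only [Pi.smul_apply, smul_eq_mul]
    congr 1
    rw [← Matrix.mulVecLin_apply, map_sum]
    simp [Matrix.mulVecLin_apply, Finset.sum_apply]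
  simp only [Pi.smul_apply, Pi.sub_apply, Finset.sum_apply, smul_eq_mul, hw]
  field_simp
  linarith [key]
end
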